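/- Let A be an m-stochastic tensor (m ≥ 3) reducible with respect to a proper subset I. Then the truncated tensor A' defined by A'_{i_1...i_m} = A_{i_1...i_m} for i_1,...,i_m ∉ I is an m-stochastic tensor on the index set {1,...,N}∖I. Conversely, if for some subset I the truncation of an m-stochastic tensor A is m-stochastic, then A is reducible with respect to I. -/
import Mathlib


open Finset

/-- An `m`-stochastic tensor of dimension `N`: all entries are nonnegative and
the sum over any single index (the others being fixed) equals `1`. -/
def MStochastic {N m : ℕ} (A : (Fin m → Fin N) → ℝ) : Prop :=
  (∀ f, 0 ≤ A f) ∧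
    ∀ (t : Fin m) (f : Fin m → Fin N), ∑ v : Fin N, A (Function.update f t v) = 1

/-- The multilinear action of the tensor `A`, with output in slot `t` and the
probability vector `p s` fed into each input slot `s ≠ t`:
`A[p]_{i} = Σ_{g, g t = i} A_g · Π_{s ≠ t} (p s)_{g s}`. -/
def mAct {N m : ℕ} (A : (Fin m → Fin N) → ℝ) (t : Fin m) (p : Fin m → Fin N → ℝ) :
    Fin N → ℝ :=
  fun i => ∑ g : Fin m → Fin N,
    if g t = i then A g * ∏ s ∈ Finset.univ.erase t, p s (g s) else 0

theorem reducible_iff_truncation_mStochastic {N m : ℕ} (hm : 3 ≤ m)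
    (A : (Fin m → Fin N) → ℝ) (hA : MStochastic A)
    (I : Finset (Fin N)) (hproper : I ≠ Finset.univ) :
    (∀ g : Fin m → Fin N,
        g ⟨0, by omega⟩ ∈ I → (∀ t : Fin m, t ≠ ⟨0, by omega⟩ → g t ∉ I) → A g = 0) ↔
      (∀ (t : Fin m) (g : Fin m → Fin N), (∀ s : Fin m, g s ∉ I) →
        ∑ v ∈ Iᶜ, A (Function.update g t v) = 1) := by
  set z : Fin m := ⟨0, by omega⟩ with hz
  obtain ⟨hnn, hsum⟩ := hA
  constructor
  · intro hred t g hg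
    -- key: entries with slot t in I (and all slots of g outside I) vanish
    have key : ∀ v ∈ I, A (Function.update g t v) = 0 := by
      intro v hv
      by_cases htz : t = z
      · subst htz
        refine hred _ (by simpa using hv) ?_
        intro s hs
        rw [Function.update_of_ne hs]
        exact hg s
      · -- double counting argument
        have claim1 : ∀ v' : Fin N, v' ∉ I →
            ∑ u ∈ Iᶜ, A (Function.update (Function.update g t v') z u) = 1 := by
          intro v' hv'
          have hfull := hsum z (Function.update g t v')
          have hIz : ∑ u ∈ I, A (Function.update (Function.update g t v') z u) = 0 := by
            refine Finset.sum_eq_zero fun u hu => ?_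
            refine hred _ (by simpa [Function.update_self] using hu) ?_
            intro s hs
            rw [Function.update_of_ne hs]
            by_cases hst : s = t
            · subst hst; simpa using hv'
            · rw [Function.update_of_ne hst]; exact hg s
          have := Finset.sum_add_sum_compl I
            (fun u => A (Function.update (Function.update g t v') z u))
          rw [hIz, zero_add] at this
          rw [this, hfull]
        have comm : ∀ u v', Function.update (Function.update g t v') z u
            = Function.update (Function.update g z u) t v' := fun u v' =>
          Function.update_comm htz v' u g
        have claim2 : ∀ u : Fin N,
            ∑ v' : Fin N, A (Function.update (Function.update g t v') z u) = 1 := by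
          intro u
          have := hsum t (Function.update g z u)
          simpa [comm] using this
        have swap : ∑ v' : Fin N, ∑ u ∈ Iᶜ,
            A (Function.update (Function.update g t v') z u) = (Iᶜ.card : ℝ) := by
          rw [Finset.sum_comm]
          rw [Finset.sum_congr rfl fun u _ => claim2 u]
          simp
        have split := Finset.sum_add_sum_compl I
          (fun v' => ∑ u ∈ Iᶜ, A (Function.update (Function.update g t v') z u))
        rw [swap] at split
        have hIc : ∑ v' ∈ Iᶜ, ∑ u ∈ Iᶜ,
            A (Function.update (Function.update g t v') z u) = (Iᶜ.card : ℝ) := by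
          rw [Finset.sum_congr rfl fun v' hv' => claim1 v' (by simpa using hv')]
          simp
        rw [hIc] at split
        have hIzero : ∑ v' ∈ I, ∑ u ∈ Iᶜ,
            A (Function.update (Function.update g t v') z u) = 0 := by linarith
        have hinner : ∀ v' ∈ I, ∑ u ∈ Iᶜ,
            A (Function.update (Function.update g t v') z u) = 0 := by
          have := (Finset.sum_eq_zero_iff_of_nonneg (fun v' _ =>
            Finset.sum_nonneg fun u _ => hnn _)).mp hIzero
          exact this
        have hterm : ∀ u ∈ Iᶜ, A (Function.update (Function.update g t v) z u) = 0 := by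
          exact (Finset.sum_eq_zero_iff_of_nonneg (fun u _ => hnn _)).mp (hinner v hv)
        have := hterm (g z) (by simpa using hg z)
        have hgz : (Function.update g t v) z = g z := Function.update_of_ne (Ne.symm htz) _ _
        rwa [← hgz, Function.update_eq_self] at this
    have hfull := hsum t g
    have hI : ∑ v ∈ I, A (Function.update g t v) = 0 := Finset.sum_eq_zero key
    have := Finset.sum_add_sum_compl I (fun v => A (Function.update g t v))
    rw [hI, zero_add] at this
    rw [this, hfull]
  · intro htr g hgz hg
    -- Iᶜ nonempty
    obtain ⟨w, hw⟩ : ∃ w : Fin N, w ∉ I := by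
      by_contra h
      push_neg at h
      exact hproper (Finset.eq_univ_iff_forall.mpr h)
    set g' : Fin m → Fin N := Function.update g z w with hg'
    have hg'I : ∀ s, g' s ∉ I := by
      intro s
      by_cases hs : s = z
      · subst hs; simpa [g'] using hw
      · rw [hg', Function.update_of_ne hs]; exact hg s hs
    have h1 := htr z g' hg'I
    have hfull := hsum z g'
    have hsum_split := Finset.sum_add_sum_compl I (fun v => A (Function.update g' z v))
    rw [h1, hfull] at hsum_split
    have hI0 : ∑ v ∈ I, A (Function.update g' z v) = 0 := by linarith
    have := (Finset.sum_eq_zero_iff_of_nonneg (fun v _ => hnn _)).mp hI0 (g z) hgz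
    have hgg : Function.update g' z (g z) = g := by
      rw [hg', Function.update_idem, Function.update_eq_self]
    rwa [hgg] at this
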